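/- The trigamma function satisfies ψ′(5/4) = π² + 8G − 16, where G is the Catalan constant. -/

import Mathlib

open Real

/-- Catalan's constant `G = ∑_{k=0}^∞ (-1)^k / (1+2k)²`. -/
noncomputable def catalanG : ℝ := ∑' k : ℕ, (-1 : ℝ) ^ k / (1 + 2 * (k : ℝ)) ^ 2

/-- The trigamma function `ψ'`, the second derivative of `log Γ`. -/
noncomputable def trigamma (x : ℝ) : ℝ :=
  deriv (deriv (fun y : ℝ => Real.log (Real.Gamma y))) x

open Filter Topology Finset Set

local notation "γ" => Real.eulerMascheroniConstant

set_option maxHeartbeats 1000000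

theorem hOdd : HasSum (fun k : ℕ => (1:ℝ) / (2*(k:ℝ)+1)^2) (π^2/8) := by
  have h6 : HasSum (fun n : ℕ => (1:ℝ) / (n:ℝ)^2) (π^2/6) := hasSum_zeta_two
  have hEven : HasSum (fun k : ℕ => (1:ℝ) / ((2*k : ℕ):ℝ)^2) (π^2/24) := by
    have h := h6.div_const 4
    have e : (fun k : ℕ => (1:ℝ)/((2*k:ℕ):ℝ)^2) = fun k : ℕ => (1:ℝ)/(k:ℝ)^2/4 := by
      funext k
      push_cast
      rcases Nat.eq_zero_or_pos k with rfl | hk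
      · simp
      · have : (k:ℝ) ≠ 0 := Nat.cast_ne_zero.mpr hk.ne'
        field_simp
        ring
    rw [e]
    convert h using 1
    · rfl
    ring
  have hinj : Function.Injective (fun k : ℕ => 2*k+1) := fun a b h => by simpa using h
  have hOddSummable : Summable (fun k : ℕ => (1:ℝ) / ((2*k+1 : ℕ):ℝ)^2) := by
    have := h6.summable.comp_injective hinj
    refine this.congr fun k => ?_
    simp [Function.comp]
  have key : HasSum (fun n : ℕ => (1:ℝ)/(n:ℝ)^2) (π^2/24 + ∑' k : ℕ, (1:ℝ)/((2*k+1 : ℕ):ℝ)^2) := by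
    apply HasSum.even_add_odd
    · exact hEven
    · exact hOddSummable.hasSum
  have huniq := key.unique h6
  have hval : ∑' k : ℕ, (1:ℝ)/((2*k+1 : ℕ):ℝ)^2 = π^2/8 := by linarith
  have hfin := hOddSummable.hasSum
  rw [hval] at hfin
  have hfun : (fun k : ℕ => (1:ℝ)/(2*(k:ℝ)+1)^2) = fun k : ℕ => (1:ℝ)/((2*k+1:ℕ):ℝ)^2 := by
    funext k; push_cast; ring_nf
  rw [hfun]; exact hfin

theorem hCatalan : HasSum (fun k : ℕ => (-1:ℝ)^k / (1 + 2*(k:ℝ))^2) catalanG := by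
  have hs : Summable (fun k : ℕ => (-1:ℝ)^k / (1 + 2*(k:ℝ))^2) := by
    apply Summable.of_abs
    refine hOdd.summable.congr fun k => ?_
    rw [abs_div, abs_pow, abs_neg, abs_one, one_pow, abs_pow]
    have : |1 + 2*(k:ℝ)| = 2*(k:ℝ)+1 := by
      rw [abs_of_pos (by positivity)]; ring
    rw [this]
  exact hs.hasSum

theorem hQuarter : HasSum (fun j : ℕ => (1:ℝ) / (4*(j:ℝ)+1)^2) ((π^2/8 + catalanG)/2) := by
  have hb : HasSum (fun k : ℕ => (1:ℝ)/(2*(k:ℝ)+1)^2 + (-1:ℝ)^k / (1 + 2*(k:ℝ))^2)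
      (π^2/8 + catalanG) := hOdd.add hCatalan
  set b : ℕ → ℝ := fun k => (1:ℝ)/(2*(k:ℝ)+1)^2 + (-1:ℝ)^k / (1 + 2*(k:ℝ))^2 with hbdef
  have hbe : ∀ j : ℕ, b (2*j) = 2 / (4*(j:ℝ)+1)^2 := by
    intro j
    simp only [hbdef]
    have hp : ((-1:ℝ))^(2*j) = 1 := Even.neg_one_pow ⟨j, by ring⟩
    push_cast
    rw [hp]
    have h1 : (2:ℝ)*(2*j)+1 = 4*j+1 := by push_cast; ring
    have h2 : (1:ℝ) + 2*(2*j) = 4*j+1 := by push_cast; ring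
    rw [h1, h2]
    ring
  have hbo : ∀ j : ℕ, b (2*j+1) = 0 := by
    intro j
    simp only [hbdef]
    have hp : ((-1:ℝ))^(2*j+1) = -1 := Odd.neg_one_pow ⟨j, by ring⟩
    push_cast
    rw [hp]
    have h2 : (1:ℝ) + 2*(2*j+1) = 2*(2*j+1)+1 := by push_cast; ring
    rw [h2]
    ring
  have hinj2 : Function.Injective (fun k : ℕ => 2*k) := fun a b h => by simpa using h
  have hesum : Summable (fun j : ℕ => (1:ℝ) / (4*(j:ℝ)+1)^2) := by
    have := hOdd.summable.comp_injective hinj2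
    refine this.congr fun j => ?_
    simp only [Function.comp]
    push_cast
    ring_nf
  set A : ℝ := ∑' j : ℕ, (1:ℝ) / (4*(j:ℝ)+1)^2 with hAdef
  have hA : HasSum (fun j : ℕ => (1:ℝ) / (4*(j:ℝ)+1)^2) A := hesum.hasSum
  have hkey : HasSum b (2*A + 0) := by
    apply HasSum.even_add_odd
    · refine (hA.mul_left 2).congr_fun fun j => ?_
      rw [hbe j]
      ring
    · have : (fun j : ℕ => b (2*j+1)) = fun _ => (0:ℝ) := funext hbo
      rw [this]
      exact hasSum_zero
  have := hkey.unique hb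
  have hAval : A = (π^2/8 + catalanG)/2 := by linarith
  rwa [hAval] at hA

theorem hFinal : HasSum (fun n : ℕ => (1:ℝ) / (5/4 + (n:ℝ))^2) (π^2 + 8*catalanG - 16) := by
  have h7 : HasSum (fun n : ℕ => (1:ℝ) / (4*((n:ℝ)+1)+1)^2) ((π^2/8 + catalanG)/2 - 1) := by
    have h := (hasSum_nat_add_iff' (f := fun j : ℕ => (1:ℝ) / (4*(j:ℝ)+1)^2) 1).mpr hQuarter
    rw [Finset.sum_range_one] at h
    norm_num at h
    convert h using 2 with n
    · rfl
    push_cast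
    ring_nf
  have h8 := h7.mul_left 16
  have : (16:ℝ) * ((π^2/8 + catalanG)/2 - 1) = π^2 + 8*catalanG - 16 := by ring
  rw [this] at h8
  refine h8.congr_fun fun n => ?_
  have hne : (4*(n:ℝ)+5) ≠ 0 := by positivity
  have hne2 : (5/4 + (n:ℝ)) ≠ 0 := by positivity
  have e1 : (4*((n:ℝ)+1)+1) = 4*(n:ℝ)+5 := by ring
  rw [e1]
  field_simp
  ring

noncomputable def psi1 (x : ℝ) : ℝ := ∑' m : ℕ, 1 / (x + (m:ℝ))^2
noncomputable def psi0 (x : ℝ) : ℝ := -γ + ∑' m : ℕ, (1/((m:ℝ)+1) - 1/(x+(m:ℝ)))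

theorem husum : Summable (fun m : ℕ => (1:ℝ)/((m:ℝ)+1)^2) := by
  have h := Real.summable_one_div_nat_pow.mpr (one_lt_two (α := ℕ))
  have := (summable_nat_add_iff 1).mpr h
  refine this.congr fun m => ?_
  push_cast
  ring_nf

theorem hbound1 : ∀ (m : ℕ) (x : ℝ), x ∈ Ioo (1:ℝ) 2 →
    ‖1/((m:ℝ)+1) - 1/(x+(m:ℝ))‖ ≤ (1:ℝ)/((m:ℝ)+1)^2 := by
  intro m x ⟨hx1, hx2⟩
  have hm1 : (0:ℝ) < (m:ℝ)+1 := by positivity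
  have hm0 : (0:ℝ) ≤ (m:ℝ) := Nat.cast_nonneg m
  have hxm : (0:ℝ) < x + m := by linarith
  have hle : (m:ℝ)+1 ≤ x + m := by linarith
  have key : 1/((m:ℝ)+1) - 1/(x+(m:ℝ)) = (x-1)/(((m:ℝ)+1)*(x+(m:ℝ))) := by
    field_simp
    ring
  rw [Real.norm_eq_abs, key, abs_div, abs_of_nonneg (by linarith : (0:ℝ) ≤ x - 1),
    abs_of_pos (by positivity : (0:ℝ) < ((m:ℝ)+1)*(x+(m:ℝ)))]
  rw [pow_two]
  exact div_le_div₀ (by norm_num) (by linarith) (by positivity)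
    (mul_le_mul_of_nonneg_left hle (by linarith))

theorem hbound2 : ∀ (m : ℕ) (x : ℝ), x ∈ Ioo (1:ℝ) 2 →
    ‖1/(x+(m:ℝ))^2‖ ≤ (1:ℝ)/((m:ℝ)+1)^2 := by
  intro m x ⟨hx1, hx2⟩
  have hm0 : (0:ℝ) ≤ (m:ℝ) := Nat.cast_nonneg m
  have hxm : (0:ℝ) < x + m := by linarith
  have hle : (m:ℝ)+1 ≤ x + m := by linarith
  rw [Real.norm_eq_abs, abs_of_pos (by positivity)]
  apply div_le_div₀ (by norm_num) le_rfl (by positivity)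
  exact pow_le_pow_left₀ (by positivity) hle 2

theorem hc_tendsto : Tendsto (fun n : ℕ => log n - ∑ m ∈ range (n+1), (1:ℝ)/((m:ℝ)+1))
    atTop (𝓝 (-γ)) := by
  have hh : ∀ n : ℕ, ((harmonic n : ℚ) : ℝ) = ∑ m ∈ range n, (1:ℝ)/((m:ℝ)+1) := by
    intro n
    rw [harmonic]
    push_cast
    exact Finset.sum_congr rfl fun m _ => by rw [one_div, add_comm]
  have h1 : Tendsto (fun n : ℕ => ((harmonic (n+1) : ℚ):ℝ) - log ((n:ℝ)+1)) atTop (𝓝 γ) := by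
    have := Real.tendsto_harmonic_sub_log.comp (tendsto_add_atTop_nat 1)
    refine this.congr fun n => ?_
    simp only [Function.comp]
    push_cast
    ring_nf
  have h2 := Real.tendsto_log_nat_add_one_sub_log
  have h3 := (h1.add h2).neg
  have hval : -(γ + 0) = -γ := by ring
  rw [hval] at h3
  refine h3.congr fun n => ?_
  rw [← hh]
  ring

theorem hderiv_seq (n : ℕ) {x : ℝ} (hx : 0 < x) :
    HasDerivAt (fun y => Real.BohrMollerup.logGammaSeq y n)
      ((log n - ∑ m ∈ range (n+1), (1:ℝ)/((m:ℝ)+1)) +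
        ∑ m ∈ range (n+1), ((1:ℝ)/((m:ℝ)+1) - 1/(x+(m:ℝ)))) x := by
  have hsum : HasDerivAt (fun y : ℝ => ∑ m ∈ range (n+1), log (y+(m:ℝ)))
      (∑ m ∈ range (n+1), 1/(x+(m:ℝ))) x := by
    apply HasDerivAt.fun_sum
    intro m _
    have h1 : HasDerivAt (fun y : ℝ => y + (m:ℝ)) 1 x := (hasDerivAt_id x).add_const _
    have hne : x + (m:ℝ) ≠ 0 := by
      have : (0:ℝ) ≤ (m:ℝ) := Nat.cast_nonneg m
      positivity
    exact h1.log hne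
  have h2 : HasDerivAt (fun y : ℝ => y * log n + log (Nat.factorial n)) (log n) x := by
    have := ((hasDerivAt_id x).mul_const (log n)).add_const (log (Nat.factorial n))
    simpa using this
  have h3 := h2.sub hsum
  have : log ↑n - ∑ m ∈ range (n+1), 1/(x+(m:ℝ)) =
      (log n - ∑ m ∈ range (n+1), (1:ℝ)/((m:ℝ)+1)) +
        ∑ m ∈ range (n+1), ((1:ℝ)/((m:ℝ)+1) - 1/(x+(m:ℝ))) := by
    rw [Finset.sum_sub_distrib]
    ring
  rw [this] at h3
  exact h3.congr_deriv rfl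

theorem hTU1 : TendstoUniformlyOn
    (fun (n:ℕ) (x:ℝ) => ∑ m ∈ range (n+1), ((1:ℝ)/((m:ℝ)+1) - 1/(x+(m:ℝ))))
    (fun x => ∑' m : ℕ, ((1:ℝ)/((m:ℝ)+1) - 1/(x+(m:ℝ)))) atTop (Ioo (1:ℝ) 2) := by
  have B := tendstoUniformlyOn_tsum_nat husum hbound1
  intro v hv
  exact (tendsto_add_atTop_nat 1).eventually (B v hv)

theorem hTUc : TendstoUniformlyOn
    (fun (n:ℕ) (_:ℝ) => log n - ∑ m ∈ range (n+1), (1:ℝ)/((m:ℝ)+1))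
    (fun _ => -γ) atTop (Ioo (1:ℝ) 2) := by
  rw [Metric.tendstoUniformlyOn_iff]
  intro ε hε
  filter_upwards [Metric.tendsto_nhds.mp hc_tendsto ε hε] with n hn x _
  rw [dist_comm] at hn
  exact hn

theorem hpsi0_deriv : ∀ x ∈ Ioo (1:ℝ) 2,
    HasDerivAt (fun y : ℝ => Real.log (Real.Gamma y)) (psi0 x) x := by
  intro x hx
  have hTLU : TendstoLocallyUniformlyOn
      (fun (n:ℕ) (x:ℝ) => (log n - ∑ m ∈ range (n+1), (1:ℝ)/((m:ℝ)+1)) +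
        ∑ m ∈ range (n+1), ((1:ℝ)/((m:ℝ)+1) - 1/(x+(m:ℝ))))
      psi0 atTop (Ioo (1:ℝ) 2) := by
    have := (hTUc.add hTU1).tendstoLocallyUniformlyOn
    exact this
  refine hasDerivAt_of_tendstoLocallyUniformlyOn
    (f := fun (n:ℕ) (x:ℝ) => Real.BohrMollerup.logGammaSeq x n)
    isOpen_Ioo hTLU ?_ ?_ hx
  · filter_upwards with n y hy
    exact hderiv_seq n (by linarith [hy.1] : (0:ℝ) < y)
  · intro y hy
    exact Real.BohrMollerup.tendsto_log_gamma (by linarith [hy.1] : (0:ℝ) < y)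

theorem hterm_summable {x : ℝ} (hx : x ∈ Ioo (1:ℝ) 2) :
    Summable (fun m : ℕ => (1:ℝ)/((m:ℝ)+1) - 1/(x+(m:ℝ))) := by
  apply Summable.of_norm
  exact husum.of_nonneg_of_le (fun m => norm_nonneg _) (fun m => hbound1 m x hx)

theorem hpsi1_deriv : ∀ x ∈ Ioo (1:ℝ) 2, HasDerivAt psi0 (psi1 x) x := by
  intro x hx
  have hTLU : TendstoLocallyUniformlyOn
      (fun (N:ℕ) (x:ℝ) => ∑ m ∈ range N, (1:ℝ)/(x+(m:ℝ))^2)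
      psi1 atTop (Ioo (1:ℝ) 2) :=
    (tendstoUniformlyOn_tsum_nat husum hbound2).tendstoLocallyUniformlyOn
  refine hasDerivAt_of_tendstoLocallyUniformlyOn
    (f := fun (N:ℕ) (x:ℝ) => -γ + ∑ m ∈ range N, ((1:ℝ)/((m:ℝ)+1) - 1/(x+(m:ℝ))))
    isOpen_Ioo hTLU ?_ ?_ hx
  · filter_upwards with N y hy
    have hsum : HasDerivAt (fun z : ℝ => ∑ m ∈ range N, ((1:ℝ)/((m:ℝ)+1) - 1/(z+(m:ℝ))))
        (∑ m ∈ range N, (1:ℝ)/(y+(m:ℝ))^2) y := by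
      apply HasDerivAt.fun_sum
      intro m _
      have hne : y + (m:ℝ) ≠ 0 := by
        have : (0:ℝ) ≤ (m:ℝ) := Nat.cast_nonneg m
        have := hy.1
        positivity
      have h1 : HasDerivAt (fun z : ℝ => z + (m:ℝ)) 1 y := (hasDerivAt_id y).add_const _
      have h2 := h1.inv hne
      have h3 := (hasDerivAt_const y ((1:ℝ)/((m:ℝ)+1))).sub h2
      have : 0 - -1 / (y + (m:ℝ))^2 = 1/(y+(m:ℝ))^2 := by ring
      rw [this] at h3
      refine h3.congr_of_eventuallyEq ?_
      filter_upwards with z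
      simp [one_div]
    simpa using hsum
  · intro y hy
    have hs := (hterm_summable hy).hasSum
    have := (hs.tendsto_sum_nat).const_add (-γ)
    exact this

theorem hderiv2 : deriv (deriv (fun y : ℝ => Real.log (Real.Gamma y))) (5/4) = psi1 (5/4) := by
  have hmem : (5/4 : ℝ) ∈ Ioo (1:ℝ) 2 := by norm_num
  have hEq : deriv (fun y : ℝ => Real.log (Real.Gamma y)) =ᶠ[𝓝 (5/4:ℝ)] psi0 := by
    filter_upwards [Ioo_mem_nhds (by norm_num : (1:ℝ) < 5/4) (by norm_num : (5/4:ℝ) < 2)]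
      with y hy
    exact (hpsi0_deriv y hy).deriv
  rw [hEq.deriv_eq]
  exact (hpsi1_deriv _ hmem).deriv

theorem stmt_15 : trigamma (5 / 4) = π ^ 2 + 8 * catalanG - 16 := by
  rw [trigamma, hderiv2, psi1]
  exact hFinal.tsum_eq
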